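/- Let G be an undirected graph on n ≥ 2 nodes with Laplacian L and minimum vertex degree d_min. Then λ₂(L) ≤ n·d_min/(n−1). -/

import Mathlib

/-- The eigenvalues of a Hermitian matrix sorted in nondecreasing order. -/
noncomputable def sortedEigs {n : ℕ} {M : Matrix (Fin n) (Fin n) ℝ}
    (hM : M.IsHermitian) : Fin n → ℝ :=
  hM.eigenvalues ∘ Tuple.sort hM.eigenvalues

open scoped RealInnerProductSpace

/-!
By Courant–Fischer, `λ₂` is at most the Rayleigh quotient of any nonzero vector orthogonal to an
eigenvector `b` of the smallest eigenvalue. The all-ones vector `𝟙` lies in the kernel of `L`, and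
for a vertex `v` of minimal degree the plane spanned by `𝟙` and `e_v` contains such a vector
`y = a • 𝟙 - c • e_v`. Its quadratic form is `c² d_min`, while Lagrange's identity gives
`n ‖y‖² ≥ c² (n - 1)`; if `c = 0` then `𝟙 ⊥ b` and `λ₂ = 0` directly.
-/

section InnerProductSpace

variable {F : Type*} [NormedAddCommGroup F] [InnerProductSpace ℝ F]

lemma norm_sq_mul_norm_smul_sub_smul_sq (u w : F) (a c : ℝ) :
    ‖u‖ ^ 2 * ‖a • u - c • w‖ ^ 2 =
      (a * ‖u‖ ^ 2 - c * ⟪u, w⟫) ^ 2 + c ^ 2 * (‖u‖ ^ 2 * ‖w‖ ^ 2 - ⟪u, w⟫ ^ 2) := by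
  rw [norm_sub_sq_real, norm_smul, norm_smul, real_inner_smul_left, real_inner_smul_right,
    Real.norm_eq_abs, Real.norm_eq_abs, mul_pow, mul_pow, sq_abs, sq_abs]
  ring

lemma LinearMap.IsSymmetric.inner_smul_sub_smul_apply_of_apply_eq_zero {T : F →ₗ[ℝ] F}
    (hT : T.IsSymmetric) {u : F} (hu : T u = 0) (w : F) (a c : ℝ) :
    ⟪a • u - c • w, T (a • u - c • w)⟫ = c ^ 2 * ⟪w, T w⟫ := by
  have hTu : ⟪u, T w⟫ = 0 := by rw [← hT, hu, inner_zero_left]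
  simp only [map_sub, map_smul, hu, smul_zero, zero_sub, inner_neg_right, inner_sub_left,
    real_inner_smul_left, real_inner_smul_right, hTu]
  ring

end InnerProductSpace

namespace Matrix

variable {n : ℕ} {M : Matrix (Fin n) (Fin n) ℝ}

lemma IsHermitian.inner_toEuclideanLin_self_eq_sum (hM : M.IsHermitian)
    (x : EuclideanSpace ℝ (Fin n)) :
    ⟪x, toEuclideanLin M x⟫ = ∑ i, hM.eigenvalues i * ⟪hM.eigenvectorBasis i, x⟫ ^ 2 := by
  rw [← hM.eigenvectorBasis.sum_inner_mul_inner x (toEuclideanLin M x)]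
  refine Finset.sum_congr rfl fun i _ => ?_
  have hb : toEuclideanLin M (hM.eigenvectorBasis i) = hM.eigenvalues i • hM.eigenvectorBasis i :=
    congrArg (WithLp.toLp 2) (hM.mulVec_eigenvectorBasis i)
  rw [← isSymmetric_toEuclideanLin_iff.mpr hM, hb, real_inner_smul_left, real_inner_comm x]
  ring

lemma IsHermitian.sortedEigs_le_eigenvalues (hM : M.IsHermitian) (h1 : 1 < n) {i : Fin n}
    (hi : i ≠ Tuple.sort hM.eigenvalues ⟨0, by omega⟩) :
    sortedEigs hM ⟨1, h1⟩ ≤ hM.eigenvalues i := by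
  set σ := Tuple.sort hM.eigenvalues
  have h : (⟨1, h1⟩ : Fin n) ≤ σ.symm i := by
    rw [Fin.le_def, Nat.one_le_iff_ne_zero]
    intro h0
    exact hi (by rw [← σ.apply_symm_apply i, Fin.ext (b := ⟨0, by omega⟩) h0])
  simpa [sortedEigs, σ] using Tuple.monotone_sort hM.eigenvalues h

lemma IsHermitian.sortedEigs_one_mul_norm_sq_le (hM : M.IsHermitian) (h1 : 1 < n)
    {y : EuclideanSpace ℝ (Fin n)}
    (hy : ⟪hM.eigenvectorBasis (Tuple.sort hM.eigenvalues ⟨0, by omega⟩), y⟫ = 0) :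
    sortedEigs hM ⟨1, h1⟩ * ‖y‖ ^ 2 ≤ ⟪y, toEuclideanLin M y⟫ := by
  rw [hM.inner_toEuclideanLin_self_eq_sum, ← hM.eigenvectorBasis.sum_sq_inner_right,
    Finset.mul_sum]
  refine Finset.sum_le_sum fun i _ => ?_
  by_cases hi : i = Tuple.sort hM.eigenvalues ⟨0, by omega⟩
  · simp [hi, hy]
  · exact mul_le_mul_of_nonneg_right (hM.sortedEigs_le_eigenvalues h1 hi) (sq_nonneg _)

lemma PosSemidef.sortedEigs_one_mul_le (hM : M.PosSemidef) (h1 : 1 < n)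
    {u : EuclideanSpace ℝ (Fin n)} (hu : toEuclideanLin M u = 0) (w : EuclideanSpace ℝ (Fin n)) :
    sortedEigs hM.isHermitian ⟨1, h1⟩ * (‖u‖ ^ 2 * ‖w‖ ^ 2 - ⟪u, w⟫ ^ 2) ≤
      ‖u‖ ^ 2 * ⟪w, toEuclideanLin M w⟫ := by
  have hH := hM.isHermitian
  set lam := sortedEigs hH ⟨1, h1⟩
  set b := hH.eigenvectorBasis (Tuple.sort hH.eigenvalues ⟨0, by omega⟩)
  have hlam : 0 ≤ lam := hM.eigenvalues_nonneg _
  have hw : 0 ≤ ⟪w, toEuclideanLin M w⟫ := by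
    rw [hH.inner_toEuclideanLin_self_eq_sum]
    exact Finset.sum_nonneg fun i _ => mul_nonneg (hM.eigenvalues_nonneg i) (sq_nonneg _)
  by_cases hp : ⟪b, u⟫ = 0
  · have hu' := hH.sortedEigs_one_mul_norm_sq_le h1 hp
    rw [hu, inner_zero_right] at hu'
    nlinarith [sq_nonneg ⟪u, w⟫, sq_nonneg ‖u‖, sq_nonneg ‖w‖, mul_nonneg hlam (sq_nonneg ‖u‖)]
  · set y := ⟪b, w⟫ • u - ⟪b, u⟫ • w
    have hy : ⟪b, y⟫ = 0 := by
      simp only [y, inner_sub_right, real_inner_smul_right]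
      ring
    have hray := hH.sortedEigs_one_mul_norm_sq_le h1 hy
    rw [(isSymmetric_toEuclideanLin_iff.mpr hH).inner_smul_sub_smul_apply_of_apply_eq_zero hu]
      at hray
    have hlag := norm_sq_mul_norm_smul_sub_smul_sq u w ⟪b, w⟫ ⟪b, u⟫
    have hp2 : 0 < ⟪b, u⟫ ^ 2 := by positivity
    refine le_of_mul_le_mul_left ?_ hp2
    nlinarith [sq_nonneg (⟪b, w⟫ * ‖u‖ ^ 2 - ⟪b, u⟫ * ⟪u, w⟫), sq_nonneg ‖u‖]

end Matrix

namespace SimpleGraph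

variable {V : Type*} [Fintype V] [DecidableEq V] (G : SimpleGraph V) [DecidableRel G.Adj]

lemma toEuclideanLin_lapMatrix_one :
    Matrix.toEuclideanLin (G.lapMatrix ℝ) (WithLp.toLp 2 1) = 0 := by
  rw [Matrix.toLpLin_toLp]
  exact congrArg (WithLp.toLp 2) (G.lapMatrix_mulVec_const_eq_zero)

lemma inner_single_toEuclideanLin_lapMatrix_single (v : V) :
    ⟪EuclideanSpace.single v 1, Matrix.toEuclideanLin (G.lapMatrix ℝ) (EuclideanSpace.single v 1)⟫ =
      G.degree v := by
  simp [EuclideanSpace.inner_single_left, lapMatrix, degMatrix]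

end SimpleGraph

/-- `λ₂(L) ≤ n d_min / (n - 1)` for a graph on `n ≥ 2` nodes with minimum degree `d_min`. -/
theorem lambda2_le_minDegree {n : ℕ} (hn : 2 ≤ n)
    (G : SimpleGraph (Fin n)) [DecidableRel G.Adj]
    (hL : (G.lapMatrix ℝ).IsHermitian) :
    sortedEigs hL ⟨1, by omega⟩ ≤ (n : ℝ) * (G.minDegree : ℝ) / ((n : ℝ) - 1) := by
  have : NeZero n := ⟨by omega⟩
  obtain ⟨v, hv⟩ := G.exists_minimal_degree_vertex
  have key := (G.posSemidef_lapMatrix ℝ).sortedEigs_one_mul_le (by omega)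
    G.toEuclideanLin_lapMatrix_one (EuclideanSpace.single v 1)
  have hone : ‖(WithLp.toLp 2 1 : EuclideanSpace ℝ (Fin n))‖ ^ 2 = n := by
    simp [EuclideanSpace.norm_eq]
  have hsingle : ‖EuclideanSpace.single v (1 : ℝ)‖ = 1 := by simp
  have hinner : ⟪(WithLp.toLp 2 1 : EuclideanSpace ℝ (Fin n)), EuclideanSpace.single v 1⟫ = 1 := by
    simp [EuclideanSpace.inner_single_right]
  rw [hone, hsingle, hinner, G.inner_single_toEuclideanLin_lapMatrix_single, ← hv] at key
  have hn' : (2 : ℝ) ≤ n := by exact_mod_cast hn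
  rw [le_div_iff₀ (by linarith)]
  linarith
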